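/- arXiv:1008.2663 — 8 statements merged into one kernel-verified Lean document; each statement's English description precedes it below -/
import Mathlib

section
/- Let ρ > 0, c₂ > 0, k ≠ 0, and c₁ ∈ (−∞,0) ∪ (0,1) with k·c₁ < 0, and define U : (0,∞) → ℝ by U(x) = −(1/k)·(c₂x)^{c₁} + (1 + ρ/k). Then: (i) U(1/g(α)) = 1 − α whenever ρ + kα > 0, where g(α) = c₂·(ρ + kα)^{−1/c₁}; (ii) U is strictly increasing and strictly concave on (0,∞); (iii) U'(x) = −(c₁c₂/k)·(c₂x)^{c₁−1} tends to 0 as x → ∞; (iv) U'(x) tends to +∞ as x → 0⁺ (Inada condition). Hence U satisfies all assumptions on a utility function (with negative wealth not allowed) and corresponds to the reaction-function factor g(α) = c₂·(ρ + kα)^{−1/c₁}. -/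
open Real Set Filter

/-- The utility function `U(x) = −(1/k)(c₂ x)^{c₁} + (1 + ρ/k)` corresponding
to the reaction-function factor `g(α) = c₂ (ρ + kα)^{−1/c₁}`: it satisfies
`U(1/g(α)) = 1 − α` whenever `ρ + kα > 0`, is strictly increasing and strictly
concave on `(0,∞)`, has `U'(x) = −(c₁c₂/k)(c₂x)^{c₁−1} → 0` as `x → ∞`, and
satisfies the Inada condition `U'(x) → +∞` as `x → 0⁺`. -/
theorem power_utility_of_sircar_papanicolaou_g
    (ρ c₁ c₂ k : ℝ) (hρ : 0 < ρ) (hc₂ : 0 < c₂) (hk : k ≠ 0)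
    (hc₁ : c₁ < 0 ∨ (0 < c₁ ∧ c₁ < 1)) (hkc₁ : k * c₁ < 0)
    (U : ℝ → ℝ) (hU : U = fun x => -(1 / k) * (c₂ * x) ^ c₁ + (1 + ρ / k))
    (g : ℝ → ℝ) (hg : g = fun α => c₂ * (ρ + k * α) ^ (-(1 / c₁))) :
    (∀ α : ℝ, 0 < ρ + k * α → U (1 / g α) = 1 - α) ∧
    StrictMonoOn U (Set.Ioi 0) ∧
    StrictConcaveOn ℝ (Set.Ioi 0) U ∧
    (∀ x ∈ Set.Ioi (0 : ℝ), deriv U x = -(c₁ * c₂ / k) * (c₂ * x) ^ (c₁ - 1)) ∧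
    Filter.Tendsto (deriv U) Filter.atTop (nhds 0) ∧
    Filter.Tendsto (deriv U) (nhdsWithin 0 (Set.Ioi 0)) Filter.atTop := by
  have hc₁0 : c₁ ≠ 0 := by rcases hc₁ with h | ⟨h, _⟩ <;> [exact h.ne; exact h.ne']
  have hC : 0 < -(c₁ * c₂ / k) := by
    have h1 : c₁ / k < 0 := by
      rcases lt_or_gt_of_ne hk with h | h
      · have h2 : 0 < c₁ := by nlinarith
        exact div_neg_of_pos_of_neg h2 h
      · have h2 : c₁ < 0 := by nlinarith
        exact div_neg_of_neg_of_pos h2 h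
    have h3 : c₁ * c₂ / k = c₂ * (c₁ / k) := by ring
    nlinarith
  -- derivative
  have hderiv : ∀ x : ℝ, 0 < x →
      HasDerivAt U (-(c₁ * c₂ / k) * (c₂ * x) ^ (c₁ - 1)) x := by
    intro x hx
    have hbase : c₂ * x ≠ 0 := (mul_pos hc₂ hx).ne'
    have h1 : HasDerivAt (fun y : ℝ => y ^ c₁) (c₁ * (c₂ * x) ^ (c₁ - 1)) (c₂ * x) :=
      Real.hasDerivAt_rpow_const (Or.inl hbase)
    have h2 : HasDerivAt (fun y : ℝ => c₂ * y) c₂ x := by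
      simpa using (hasDerivAt_id x).const_mul c₂
    have h3 : HasDerivAt (fun y : ℝ => (c₂ * y) ^ c₁)
        (c₁ * (c₂ * x) ^ (c₁ - 1) * c₂) x := h1.comp x h2
    have h4 : HasDerivAt U (-(1 / k) * (c₁ * (c₂ * x) ^ (c₁ - 1) * c₂)) x := by
      rw [hU]; exact (h3.const_mul (-(1 / k))).add_const _
    convert h4 using 1; ring
  have hderiv' : ∀ x ∈ Set.Ioi (0 : ℝ),
      deriv U x = -(c₁ * c₂ / k) * (c₂ * x) ^ (c₁ - 1) := fun x hx =>
    (hderiv x hx).deriv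
  have hcont : ContinuousOn U (Set.Ioi 0) := fun x hx =>
    ((hderiv x hx).differentiableAt.continuousAt).continuousWithinAt
  have hanti : StrictAntiOn (deriv U) (Set.Ioi 0) := by
    intro x hx y hy hxy
    rw [hderiv' x hx, hderiv' y hy]
    have h1 : (c₂ * y) ^ (c₁ - 1) < (c₂ * x) ^ (c₁ - 1) := by
      apply Real.rpow_lt_rpow_of_neg (mul_pos hc₂ hx)
        (by exact mul_lt_mul_of_pos_left hxy hc₂)
      rcases hc₁ with h | ⟨_, h⟩ <;> linarith
    exact mul_lt_mul_of_pos_left h1 hC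
  refine ⟨?_, ?_, ?_, hderiv', ?_, ?_⟩
  · intro α hα
    rw [hU, hg]
    have hb : (0:ℝ) < (ρ + k * α) ^ (-(1 / c₁)) := Real.rpow_pos_of_pos hα _
    have key : c₂ * (1 / (c₂ * (ρ + k * α) ^ (-(1 / c₁)))) = (ρ + k * α) ^ (1 / c₁) := by
      rw [Real.rpow_neg hα.le]
      field_simp
    simp only [key]
    rw [← Real.rpow_mul hα.le]
    have : (1 / c₁) * c₁ = 1 := by field_simp
    rw [this]
    simp only [Real.rpow_one]
    field_simp
    ring
  · apply strictMonoOn_of_deriv_pos (convex_Ioi 0) hcont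
    intro x hx
    rw [interior_Ioi] at hx
    rw [hderiv' x hx]
    exact mul_pos hC (Real.rpow_pos_of_pos (mul_pos hc₂ hx) _)
  · exact StrictAntiOn.strictConcaveOn_of_deriv (convex_Ioi 0) hcont
      (by rwa [interior_Ioi])
  · have hlim : Tendsto (fun x : ℝ => -(c₁ * c₂ / k) * (c₂ * x) ^ (c₁ - 1)) atTop (nhds 0) := by
      have h1 : Tendsto (fun x : ℝ => c₂ * x) atTop atTop :=
        Filter.Tendsto.const_mul_atTop hc₂ tendsto_id
      have hexp : (0:ℝ) < 1 - c₁ := by rcases hc₁ with h | ⟨_, h⟩ <;> linarith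
      have h2 : Tendsto (fun y : ℝ => y ^ (-(1 - c₁))) atTop (nhds 0) :=
        tendsto_rpow_neg_atTop hexp
      have h3 := (h2.comp h1).const_mul (-(c₁ * c₂ / k))
      simpa [mul_zero, neg_sub, sub_eq_add_neg, neg_add, neg_neg, add_comm] using h3
    refine hlim.congr' ?_
    filter_upwards [eventually_gt_atTop (0:ℝ)] with x hx
    exact (hderiv' x hx).symm
  · have hexp : (0:ℝ) < 1 - c₁ := by rcases hc₁ with h | ⟨_, h⟩ <;> linarith
    have h1 : Tendsto (fun x : ℝ => c₂ * x) (nhdsWithin 0 (Set.Ioi 0))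
        (nhdsWithin 0 (Set.Ioi 0)) := by
      apply tendsto_nhdsWithin_of_tendsto_nhds_of_eventually_within
      · exact ((continuous_mul_left c₂).tendsto' 0 0 (by ring)).mono_left nhdsWithin_le_nhds
      · filter_upwards [self_mem_nhdsWithin] with x hx
        exact mul_pos hc₂ hx
    have h2 : Tendsto (fun y : ℝ => y⁻¹) (nhdsWithin 0 (Set.Ioi 0)) atTop :=
      tendsto_inv_nhdsGT_zero
    have h3 : Tendsto (fun y : ℝ => (y⁻¹) ^ (1 - c₁)) (nhdsWithin 0 (Set.Ioi 0)) atTop :=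
      (tendsto_rpow_atTop hexp).comp h2
    have h4 : Tendsto (fun x : ℝ => ((c₂ * x)⁻¹) ^ (1 - c₁)) (nhdsWithin 0 (Set.Ioi 0)) atTop :=
      h3.comp h1
    have h5 := h4.const_mul_atTop hC
    refine h5.congr' ?_
    filter_upwards [self_mem_nhdsWithin] with x hx
    have hpos : (0:ℝ) < c₂ * x := mul_pos hc₂ hx
    rw [hderiv' x hx, Real.inv_rpow hpos.le, ← Real.rpow_neg hpos.le, neg_sub]
end

section
/- Let σ > 0 and c₁ ≠ 0. Suppose u : (0,∞) × ℝ → ℝ is continuously twice differentiable in S and once in t, solves the special-model PDE u_t + (1/2)·σ²S²·u_SS·u_S² / (u_S − c₁·S·u_SS)² = 0 at every point, and the denominator u_S − c₁·S·u_SS is nonzero everywhere. Then for every λ > 0, μ > 0, and a, c ∈ ℝ, the function v(S,t) = μ·u(S/λ, t − a) + c also solves the same PDE with nonvanishing denominator. (This is the solution-transformation content of the four-dimensional symmetry algebra L₄ = ⟨S∂_S, u∂_u, ∂_u, ∂_t⟩ of the special model.) -/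
open Real Set

/-!
For `v(S,t) = μ u(S/λ, t−a) + c` the chain rule gives `v_S = (μ/λ) u_S`, `v_SS = (μ/λ²) u_SS`
and `v_t = μ u_t`, all evaluated at `(S/λ, t−a)`. Since `S u_SS` scales like `u_S`, the
denominator `v_S − c₁ S v_SS` is `μ/λ` times that of `u`, and the left-hand side of the PDE
for `v` is `μ` times the one for `u`. Because `deriv` is `0` wherever its argument is not
differentiable, the three chain-rule identities hold for arbitrary `u`.
-/

/-- Partial derivative of `u(S,t)` with respect to `S`. -/
noncomputable def pS (u : ℝ → ℝ → ℝ) (S t : ℝ) : ℝ := deriv (fun s => u s t) S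

/-- Second partial derivative of `u(S,t)` with respect to `S`. -/
noncomputable def pSS (u : ℝ → ℝ → ℝ) (S t : ℝ) : ℝ := deriv (fun s => pS u s t) S

/-- Partial derivative of `u(S,t)` with respect to `t`. -/
noncomputable def pt (u : ℝ → ℝ → ℝ) (S t : ℝ) : ℝ := deriv (fun τ => u S τ) t

/-- `u` solves the special-model PDE
`u_t + (1/2) σ² S² u_SS u_S² / (u_S − c₁ S u_SS)² = 0` on `(0,∞) × ℝ`,
with nonvanishing denominator. -/
def SolvesSpecialModel (σ c₁ : ℝ) (u : ℝ → ℝ → ℝ) : Prop :=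
  ∀ S ∈ Set.Ioi (0 : ℝ), ∀ t : ℝ,
    pS u S t - c₁ * S * pSS u S t ≠ 0 ∧
    pt u S t + (1 / 2) * σ ^ 2 * S ^ 2 * pSS u S t * (pS u S t) ^ 2 /
      (pS u S t - c₁ * S * pSS u S t) ^ 2 = 0

theorem deriv_comp_div_const {𝕜 : Type*} [NontriviallyNormedField 𝕜] (f : 𝕜 → 𝕜) (c x : 𝕜) :
    deriv (fun y => f (y / c)) x = deriv f (x / c) / c := by
  simp only [div_eq_inv_mul]
  exact deriv_comp_mul_left c⁻¹ f x

section Rescaling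

variable (u : ℝ → ℝ → ℝ) (lam μ a c S t : ℝ)

theorem pS_rescale :
    pS (fun S t => μ * u (S / lam) (t - a) + c) S t = μ / lam * pS u (S / lam) (t - a) := by
  simp only [pS, deriv_add_const, deriv_const_mul_field]
  rw [deriv_comp_div_const (fun s => u s (t - a))]
  ring

theorem pSS_rescale :
    pSS (fun S t => μ * u (S / lam) (t - a) + c) S t
      = μ / lam ^ 2 * pSS u (S / lam) (t - a) := by
  simp only [pSS, pS_rescale, deriv_const_mul_field]
  rw [deriv_comp_div_const (fun s => pS u s (t - a))]
  ring

theorem pt_rescale :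
    pt (fun S t => μ * u (S / lam) (t - a) + c) S t = μ * pt u (S / lam) (t - a) := by
  simp only [pt, deriv_add_const, deriv_const_mul_field, deriv_comp_sub_const]

end Rescaling

theorem special_model_symmetry_L4_general
    (σ c₁ : ℝ)
    (u : ℝ → ℝ → ℝ)
    (hu : SolvesSpecialModel σ c₁ u)
    (lam μ a c : ℝ) (hlam : 0 < lam) (hμ : 0 < μ) :
    SolvesSpecialModel σ c₁ (fun S t => μ * u (S / lam) (t - a) + c) := by
  intro S hS t
  obtain ⟨hden, hpde⟩ := hu (S / lam) (div_pos hS hlam) (t - a)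
  rw [pS_rescale, pSS_rescale, pt_rescale]
  set p := pS u (S / lam) (t - a)
  set q := pSS u (S / lam) (t - a)
  have hden_rescale :
      μ / lam * p - c₁ * S * (μ / lam ^ 2 * q) = μ / lam * (p - c₁ * (S / lam) * q) := by
    field_simp
  rw [hden_rescale]
  refine ⟨mul_ne_zero (div_ne_zero hμ.ne' hlam.ne') hden, ?_⟩
  calc _ = μ * (pt u (S / lam) (t - a)
          + 1 / 2 * σ ^ 2 * (S / lam) ^ 2 * q * p ^ 2 / (p - c₁ * (S / lam) * q) ^ 2) := by
        field_simp
    _ = 0 := by rw [hpde, mul_zero]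

/-- The solution-transformation content of the four-dimensional symmetry
algebra `L₄ = ⟨S∂_S, u∂_u, ∂_u, ∂_t⟩` of the special model: if `u` solves the
special model then so does `v(S,t) = μ u(S/λ, t−a) + c`. -/
theorem special_model_symmetry_L4
    (σ c₁ : ℝ) (hσ : 0 < σ) (hc₁ : c₁ ≠ 0)
    (u : ℝ → ℝ → ℝ)
    (hreg : ∀ t : ℝ, ContDiffOn ℝ 2 (fun s => u s t) (Set.Ioi 0))
    (hregt : ∀ S ∈ Set.Ioi (0 : ℝ), ContDiff ℝ 1 (fun τ => u S τ))
    (hu : SolvesSpecialModel σ c₁ u)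
    (lam μ a c : ℝ) (hlam : 0 < lam) (hμ : 0 < μ) :
    SolvesSpecialModel σ c₁ (fun S t => μ * u (S / lam) (t - a) + c) :=
  special_model_symmetry_L4_general σ c₁ u hu lam μ a c hlam hμ
end

section
/- Let σ, ρ > 0, γ ≠ 0, let g : ℝ → ℝ be differentiable with g > 0, and let W : ℝ → ℝ be twice differentiable. Define u(S,t) = S·W(ln S − γt) for S > 0, and suppose the denominator 1 − ρ·(g'(ρ(W(z)+W'(z)))/g(ρ(W(z)+W'(z))))·(W'(z)+W''(z)) is nonzero for all z ∈ ℝ (note that u_S = W + W' and S·u_SS = W' + W'' at z = ln S − γt). Then u solves the general illiquid-market PDE u_t + (1/2)·σ²S²·u_SS / (1 − ρ·(g'(ρu_S)/g(ρu_S))·S·u_SS)² = 0 if and only if W satisfies the second-order ODE 2γ·W'(z) = σ²·(W'(z)+W''(z)) / (1 − ρ·(g'(ρ(W(z)+W'(z)))/g(ρ(W(z)+W'(z))))·(W'(z)+W''(z)))² for all z ∈ ℝ. (This is the reduction of the general model under the subalgebra h₃^g = ⟨V₁cos φ + V₃sin φ⟩ with γ = cotan φ, using the invariants z = ln S − γt,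 W = u/S.) -/
open Real Set

/-!
With `z = ln S − γt` the ansatz gives `u_t = −γ S W'(z)`, `u_S = W(z) + W'(z)` and
`S u_SS = W'(z) + W''(z)`, so the PDE operator applied to `u` is `S/2` times the residual
`σ² (W' + W'') / (1 − …)² − 2γ W'` of the ODE at `z`. As `(S, t) ↦ z` maps `S > 0` onto `ℝ`
(take `S = e^z`, `t = 0`), the PDE holds for all `S > 0` iff the ODE holds everywhere.
-/

noncomputable def illiquidOperator (σ ρ : ℝ) (g : ℝ → ℝ) (u : ℝ → ℝ → ℝ) (S t : ℝ) : ℝ :=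
  pt u S t + (1 / 2) * σ ^ 2 * S ^ 2 * pSS u S t /
    (1 - ρ * (deriv g (ρ * pS u S t) / g (ρ * pS u S t)) * S * pSS u S t) ^ 2

noncomputable def reducedRHS (σ ρ : ℝ) (g W : ℝ → ℝ) (z : ℝ) : ℝ :=
  σ ^ 2 * (deriv W z + deriv (deriv W) z) /
    (1 - ρ * (deriv g (ρ * (W z + deriv W z)) / g (ρ * (W z + deriv W z))) *
      (deriv W z + deriv (deriv W) z)) ^ 2

lemma hasDerivAt_comp_log_sub {F : ℝ → ℝ} {c S : ℝ} (hF : DifferentiableAt ℝ F (log S - c))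
    (hS : S ≠ 0) : HasDerivAt (fun s => F (log s - c)) (deriv F (log S - c) / S) S := by
  rw [div_eq_mul_inv]
  exact hF.hasDerivAt.comp S ((hasDerivAt_log hS).sub_const c)

section Ansatz

variable {W : ℝ → ℝ} {γ S t : ℝ}

lemma pt_ansatz (hW : Differentiable ℝ W) :
    pt (fun S t => S * W (log S - γ * t)) S t = -γ * S * deriv W (log S - γ * t) := by
  have hz : HasDerivAt (fun τ => log S - γ * τ) (-γ) t := by
    simpa using ((hasDerivAt_id t).const_mul γ).const_sub (log S)
  have h : HasDerivAt (fun τ => S * W (log S - γ * τ)) (S * (deriv W (log S - γ * t) * -γ)) t :=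
    ((hW _).hasDerivAt.comp t hz).const_mul S
  rw [pt, h.deriv]
  ring

lemma pS_ansatz (hW : Differentiable ℝ W) (hS : S ≠ 0) :
    pS (fun S t => S * W (log S - γ * t)) S t = W (log S - γ * t) + deriv W (log S - γ * t) := by
  have h : HasDerivAt (fun s => s * W (log s - γ * t))
      (1 * W (log S - γ * t) + S * (deriv W (log S - γ * t) / S)) S :=
    (hasDerivAt_id' S).mul (hasDerivAt_comp_log_sub (hW _) hS)
  rw [pS, h.deriv, one_mul, mul_div_cancel₀ _ hS]

lemma pSS_ansatz (hW : Differentiable ℝ W) (hW' : Differentiable ℝ (deriv W)) (hS : S ≠ 0) :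
    pSS (fun S t => S * W (log S - γ * t)) S t =
      (deriv W (log S - γ * t) + deriv (deriv W) (log S - γ * t)) / S := by
  have hpS : (fun s => pS (fun S t => S * W (log S - γ * t)) s t)
      =ᶠ[nhds S] fun s => W (log s - γ * t) + deriv W (log s - γ * t) := by
    filter_upwards [isOpen_ne.mem_nhds hS] with s hs
    exact pS_ansatz hW hs
  have h : HasDerivAt (fun s => W (log s - γ * t) + deriv W (log s - γ * t))
      (deriv W (log S - γ * t) / S + deriv (deriv W) (log S - γ * t) / S) S :=
    (hasDerivAt_comp_log_sub (hW _) hS).add (hasDerivAt_comp_log_sub (hW' _) hS)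
  rw [pSS, hpS.deriv_eq, h.deriv, add_div]

lemma illiquidOperator_ansatz {σ ρ : ℝ} {g : ℝ → ℝ} (hW : Differentiable ℝ W)
    (hW' : Differentiable ℝ (deriv W)) (hS : S ≠ 0) :
    illiquidOperator σ ρ g (fun S t => S * W (log S - γ * t)) S t =
      S / 2 * (reducedRHS σ ρ g W (log S - γ * t) - 2 * γ * deriv W (log S - γ * t)) := by
  have hcancel : ∀ q A : ℝ, q * S * (A / S) = q * A := fun q A => by field_simp
  rw [illiquidOperator, reducedRHS, pt_ansatz hW, pS_ansatz hW hS, pSS_ansatz hW hW' hS,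
    hcancel]
  field_simp
  ring

lemma illiquidOperator_ansatz_eq_zero_iff {σ ρ : ℝ} {g : ℝ → ℝ} (hW : Differentiable ℝ W)
    (hW' : Differentiable ℝ (deriv W)) (hS : S ≠ 0) :
    illiquidOperator σ ρ g (fun S t => S * W (log S - γ * t)) S t = 0 ↔
      2 * γ * deriv W (log S - γ * t) = reducedRHS σ ρ g W (log S - γ * t) := by
  rw [illiquidOperator_ansatz hW hW' hS, mul_eq_zero, sub_eq_zero, eq_comm (a := 2 * γ * _)]
  simp [hS]

end Ansatz

theorem general_model_reduction_h3_general
    (σ ρ γ : ℝ) (g : ℝ → ℝ)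
    (W : ℝ → ℝ) (hW : Differentiable ℝ W) (hW' : Differentiable ℝ (deriv W))
    (u : ℝ → ℝ → ℝ) (hu : u = fun S t => S * W (Real.log S - γ * t)) :
    (∀ S ∈ Set.Ioi (0 : ℝ), ∀ t : ℝ,
      pt u S t + (1 / 2) * σ ^ 2 * S ^ 2 * pSS u S t /
        (1 - ρ * (deriv g (ρ * pS u S t) / g (ρ * pS u S t)) * S * pSS u S t) ^ 2 = 0)
    ↔
    (∀ z : ℝ,
      2 * γ * deriv W z =
        σ ^ 2 * (deriv W z + deriv (deriv W) z) /
          (1 - ρ * (deriv g (ρ * (W z + deriv W z)) / g (ρ * (W z + deriv W z))) *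
            (deriv W z + deriv (deriv W) z)) ^ 2) := by
  subst hu
  constructor
  · intro hpde z
    have h := (illiquidOperator_ansatz_eq_zero_iff hW hW' (exp_pos z).ne').1
      (hpde _ (exp_pos z) 0)
    simpa only [reducedRHS, log_exp, mul_zero, sub_zero] using h
  · intro hode S hS t
    exact (illiquidOperator_ansatz_eq_zero_iff hW hW' (ne_of_gt hS)).2 (hode _)

/-- Reduction of the general illiquid-market model under the subalgebra
`h₃^g = ⟨V₁ cos φ + V₃ sin φ⟩`, `γ = cotan φ` (invariants `z = ln S − γt`,
`W = u/S`): the ansatz `u(S,t) = S·W(ln S − γt)` solves the PDE iff `W`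
satisfies the second-order ODE
`2γ W' = σ² (W' + W'') / (1 − ρ (g'(ρ(W+W'))/g(ρ(W+W'))) (W' + W''))²`. -/
theorem general_model_reduction_h3
    (σ ρ γ : ℝ) (hσ : 0 < σ) (hρ : 0 < ρ) (hγ : γ ≠ 0)
    (g : ℝ → ℝ) (hg : Differentiable ℝ g) (hgpos : ∀ x, 0 < g x)
    (W : ℝ → ℝ) (hW : Differentiable ℝ W) (hW' : Differentiable ℝ (deriv W))
    (u : ℝ → ℝ → ℝ) (hu : u = fun S t => S * W (Real.log S - γ * t))
    (hden : ∀ z : ℝ,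
      1 - ρ * (deriv g (ρ * (W z + deriv W z)) / g (ρ * (W z + deriv W z))) *
        (deriv W z + deriv (deriv W) z) ≠ 0) :
    (∀ S ∈ Set.Ioi (0 : ℝ), ∀ t : ℝ,
      pt u S t + (1 / 2) * σ ^ 2 * S ^ 2 * pSS u S t /
        (1 - ρ * (deriv g (ρ * pS u S t) / g (ρ * pS u S t)) * S * pSS u S t) ^ 2 = 0)
    ↔
    (∀ z : ℝ,
      2 * γ * deriv W z =
        σ ^ 2 * (deriv W z + deriv (deriv W) z) /
          (1 - ρ * (deriv g (ρ * (W z + deriv W z)) / g (ρ * (W z + deriv W z))) *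
            (deriv W z + deriv (deriv W) z)) ^ 2) :=
  general_model_reduction_h3_general σ ρ γ g W hW hW' u hu
end

section
/- Let σ > 0, c₁ ≠ 0, γ ≠ 0, set β = (c₁+1)/c₁ and κ = σ²/(2γc₁²), and let W : ℝ → ℝ be twice differentiable with W''(z) − β·W'(z) ≠ 0 and W'(z) ≠ 0 for all z. Define u(S,t) = W(ln S − γt) for S > 0. Then: (a) u solves the special-model PDE u_t + (1/2)·σ²S²·u_SS·u_S² / (u_S − c₁·S·u_SS)² = 0 if and only if W satisfies the second-order ODE W' − κ·(W'' − W')·(W')² / (W'' − β·W')² = 0 on ℝ; and (b) this ODE holds if and only if Y = W' satisfies the first-order ODE (Y')² − (2β + κ)·Y·Y' + (β² + κ)·Y² = 0 on ℝ. (This is the reduction of the special model under the subgroup H₂, with invariants z = ln S − γt, W = u.) -/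
open Real Set

/-!
Along the invariant `z = ln S − γt` one has `u_t = −γW'`, `S u_S = W'` and `S² u_SS = W'' − W'`,
so `S` cancels from the PDE and its left-hand side becomes `−γ` times the residual of the
reduced ODE at `z`; every `z` is attained (at `S = eᶻ`, `t = 0`), which gives (a).
For (b), clearing the nonzero denominator `(W'' − βW')²` turns the reduced ODE into `W'` times
the quadratic `(W'')² − (2β+κ)W'W'' + (β²+κ)(W')²`, and `W' ≠ 0`.
-/

section Ansatz

variable (W : ℝ → ℝ) (γ : ℝ)

lemma hasDerivAt_log_sub_mul {S : ℝ} (hS : 0 < S) (t : ℝ) :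
    HasDerivAt (fun s => log s - γ * t) S⁻¹ S :=
  (hasDerivAt_log hS.ne').sub_const _

lemma pS_comp_log_sub {S : ℝ} (hS : 0 < S) (t : ℝ)
    (hW : DifferentiableAt ℝ W (log S - γ * t)) :
    pS (fun S t => W (log S - γ * t)) S t = deriv W (log S - γ * t) / S := by
  rw [div_eq_mul_inv]
  exact (hW.hasDerivAt.comp S (hasDerivAt_log_sub_mul γ hS t)).deriv

lemma pSS_comp_log_sub {S : ℝ} (hS : 0 < S) (t : ℝ) (hW : Differentiable ℝ W)
    (hW' : DifferentiableAt ℝ (deriv W) (log S - γ * t)) :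
    pSS (fun S t => W (log S - γ * t)) S t =
      (deriv (deriv W) (log S - γ * t) - deriv W (log S - γ * t)) / S ^ 2 := by
  have hpS : (fun s => pS (fun S t => W (log S - γ * t)) s t) =ᶠ[nhds S]
      fun s => deriv W (log s - γ * t) / s := by
    filter_upwards [Ioi_mem_nhds hS] with s hs
    exact pS_comp_log_sub W γ hs t (hW _)
  have hquot : HasDerivAt (fun s => deriv W (log s - γ * t) / s)
      ((deriv (deriv W) (log S - γ * t) * S⁻¹ * S - deriv W (log S - γ * t) * 1) / S ^ 2) S :=
    (hW'.hasDerivAt.comp (h₂ := deriv W) S (hasDerivAt_log_sub_mul γ hS t)).fun_div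
      (hasDerivAt_id' S) hS.ne'
  rw [pSS, hpS.deriv_eq, hquot.deriv]
  field_simp

lemma pt_comp_log_sub (S t : ℝ) (hW : DifferentiableAt ℝ W (log S - γ * t)) :
    pt (fun S t => W (log S - γ * t)) S t = -γ * deriv W (log S - γ * t) := by
  have hz : HasDerivAt (fun τ => log S - γ * τ) (-γ) t := by
    simpa using ((hasDerivAt_id t).const_mul γ).const_sub (log S)
  rw [mul_comm]
  exact (hW.hasDerivAt.comp t hz).deriv

end Ansatz

lemma special_model_residual_eq {σ c₁ γ β κ a b S : ℝ} (hc₁ : c₁ ≠ 0) (hγ : γ ≠ 0)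
    (hβ : β = (c₁ + 1) / c₁) (hκ : κ = σ ^ 2 / (2 * γ * c₁ ^ 2)) (hS : S ≠ 0)
    (hd : b - β * a ≠ 0) :
    -γ * a + (1 / 2) * σ ^ 2 * S ^ 2 * ((b - a) / S ^ 2) * (a / S) ^ 2 /
        (a / S - c₁ * S * ((b - a) / S ^ 2)) ^ 2 =
      -γ * (a - κ * (b - a) * a ^ 2 / (b - β * a) ^ 2) := by
  have hden : a / S - c₁ * S * ((b - a) / S ^ 2) = -(c₁ * (b - β * a)) / S := by
    rw [hβ]; field_simp; ring
  have hd' : c₁ * (b - β * a) ≠ 0 := mul_ne_zero hc₁ hd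
  rw [hden, hκ]
  field_simp
  ring

lemma reduced_ode_iff_quadratic {β κ a b : ℝ} (ha : a ≠ 0) (hd : b - β * a ≠ 0) :
    a - κ * (b - a) * a ^ 2 / (b - β * a) ^ 2 = 0 ↔
      b ^ 2 - (2 * β + κ) * a * b + (β ^ 2 + κ) * a ^ 2 = 0 := by
  have hfactor : a - κ * (b - a) * a ^ 2 / (b - β * a) ^ 2 =
      a * (b ^ 2 - (2 * β + κ) * a * b + (β ^ 2 + κ) * a ^ 2) / (b - β * a) ^ 2 := by
    rw [eq_div_iff (pow_ne_zero 2 hd), sub_mul, div_mul_cancel₀ _ (pow_ne_zero 2 hd)]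
    ring
  rw [hfactor, div_eq_zero_iff, mul_eq_zero]
  simp [ha, hd]

theorem special_model_reduction_H2_general
    (σ c₁ γ β κ : ℝ) (hc₁ : c₁ ≠ 0) (hγ : γ ≠ 0)
    (hβ : β = (c₁ + 1) / c₁) (hκ : κ = σ ^ 2 / (2 * γ * c₁ ^ 2))
    (W : ℝ → ℝ) (hW' : Differentiable ℝ (deriv W))
    (hden : ∀ z : ℝ, deriv (deriv W) z - β * deriv W z ≠ 0)
    (hW0 : ∀ z : ℝ, deriv W z ≠ 0)
    (u : ℝ → ℝ → ℝ) (hu : u = fun S t => W (Real.log S - γ * t)) :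
    ((∀ S ∈ Set.Ioi (0 : ℝ), ∀ t : ℝ,
      pt u S t + (1 / 2) * σ ^ 2 * S ^ 2 * pSS u S t * (pS u S t) ^ 2 /
        (pS u S t - c₁ * S * pSS u S t) ^ 2 = 0)
    ↔
    (∀ z : ℝ,
      deriv W z - κ * (deriv (deriv W) z - deriv W z) * (deriv W z) ^ 2 /
        (deriv (deriv W) z - β * deriv W z) ^ 2 = 0)) ∧
    ((∀ z : ℝ,
      deriv W z - κ * (deriv (deriv W) z - deriv W z) * (deriv W z) ^ 2 /
        (deriv (deriv W) z - β * deriv W z) ^ 2 = 0)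
    ↔
    (∀ z : ℝ,
      (deriv (deriv W) z) ^ 2 - (2 * β + κ) * deriv W z * deriv (deriv W) z +
        (β ^ 2 + κ) * (deriv W z) ^ 2 = 0)) := by
  have hW : Differentiable ℝ W := fun z => differentiableAt_of_deriv_ne_zero (hW0 z)
  have hpde : ∀ S, 0 < S → ∀ t,
      pt u S t + (1 / 2) * σ ^ 2 * S ^ 2 * pSS u S t * (pS u S t) ^ 2 /
          (pS u S t - c₁ * S * pSS u S t) ^ 2 =
        -γ * (deriv W (log S - γ * t) - κ * (deriv (deriv W) (log S - γ * t) -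
          deriv W (log S - γ * t)) * deriv W (log S - γ * t) ^ 2 /
          (deriv (deriv W) (log S - γ * t) - β * deriv W (log S - γ * t)) ^ 2) := by
    intro S hS t
    subst hu
    rw [pt_comp_log_sub W γ S t (hW _), pS_comp_log_sub W γ hS t (hW _),
      pSS_comp_log_sub W γ hS t hW (hW' _)]
    exact special_model_residual_eq hc₁ hγ hβ hκ hS.ne' (hden _)
  refine ⟨⟨fun h z => ?_, fun h S hS t => ?_⟩,
    forall_congr' fun z => reduced_ode_iff_quadratic (hW0 z) (hden z)⟩
  · have hz := hpde (exp z) (exp_pos z) 0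
    rw [h _ (exp_pos z), log_exp, mul_zero, sub_zero, eq_comm] at hz
    exact (mul_eq_zero.mp hz).resolve_left (neg_ne_zero.mpr hγ)
  · rw [hpde S hS t, h, mul_zero]

/-- Reduction of the special model under the subgroup `H₂` (invariants
`z = ln S − γt`, `W = u`): with `β = (c₁+1)/c₁`, `κ = σ²/(2γc₁²)`, the ansatz
`u(S,t) = W(ln S − γt)` solves the special-model PDE iff
`W' − κ (W'' − W')(W')²/(W'' − βW')² = 0`, which in turn holds iff `Y = W'`
satisfies `(Y')² − (2β+κ) Y Y' + (β²+κ) Y² = 0`. -/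
theorem special_model_reduction_H2
    (σ c₁ γ β κ : ℝ) (hσ : 0 < σ) (hc₁ : c₁ ≠ 0) (hγ : γ ≠ 0)
    (hβ : β = (c₁ + 1) / c₁) (hκ : κ = σ ^ 2 / (2 * γ * c₁ ^ 2))
    (W : ℝ → ℝ) (hW : Differentiable ℝ W) (hW' : Differentiable ℝ (deriv W))
    (hden : ∀ z : ℝ, deriv (deriv W) z - β * deriv W z ≠ 0)
    (hW0 : ∀ z : ℝ, deriv W z ≠ 0)
    (u : ℝ → ℝ → ℝ) (hu : u = fun S t => W (Real.log S - γ * t)) :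
    ((∀ S ∈ Set.Ioi (0 : ℝ), ∀ t : ℝ,
      pt u S t + (1 / 2) * σ ^ 2 * S ^ 2 * pSS u S t * (pS u S t) ^ 2 /
        (pS u S t - c₁ * S * pSS u S t) ^ 2 = 0)
    ↔
    (∀ z : ℝ,
      deriv W z - κ * (deriv (deriv W) z - deriv W z) * (deriv W z) ^ 2 /
        (deriv (deriv W) z - β * deriv W z) ^ 2 = 0)) ∧
    ((∀ z : ℝ,
      deriv W z - κ * (deriv (deriv W) z - deriv W z) * (deriv W z) ^ 2 /
        (deriv (deriv W) z - β * deriv W z) ^ 2 = 0)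
    ↔
    (∀ z : ℝ,
      (deriv (deriv W) z) ^ 2 - (2 * β + κ) * deriv W z * deriv (deriv W) z +
        (β ^ 2 + κ) * (deriv W z) ^ 2 = 0)) :=
  special_model_reduction_H2_general σ c₁ γ β κ hc₁ hγ hβ hκ W hW' hden hW0 u hu
end

section
/- Let σ > 0, c₁ ≠ 0, γ ≠ 0, set β = (c₁+1)/c₁ and κ = σ²/(2γc₁²), assume κ·(κ + 4(β−1)) ≥ 0, and let k be a root of k² − (2β + κ)·k + (β² + κ) = 0, i.e. k = β + κ/2 ± (1/2)·√(κ(κ + 4(β−1))). Assume d₁ ≠ 0, k ≠ 0 and k ≠ β. Then the function u(S,t) = d₁·S^k·e^{−γkt} + d₂ (for any d₂ ∈ ℝ) satisfies u_S − c₁·S·u_SS ≠ 0 for all S > 0 and solves the special-model PDE u_t + (1/2)·σ²S²·u_SS·u_S² / (u_S − c₁·S·u_SS)² = 0 for all S > 0, t ∈ ℝ. (These invariant solutions describe power derivative products.) -/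
/-! For `u = d₁ S^k e^{-γkt} + d₂` one has `S u_SS = (k - 1) u_S` and `u_t = -γ S u_S`. With
`c₁ β = c₁ + 1` the first relation turns the denominator into `c₁ (β - k) u_S`, and then the left
side of the PDE equals `γ S u_S (κ (k - 1) / (β - k)² - 1)`. The quadratic for `k` is exactly
`κ (k - 1) = (β - k)²`. -/

open Real Set

open Topology

section PowerTimesExp

variable (d c k r : ℝ)

lemma pS_rpow_mul_exp {S : ℝ} (hS : 0 < S) (t : ℝ) :
    pS (fun s t => d * s ^ k * exp (r * t) + c) S t = d * k * S ^ (k - 1) * exp (r * t) := by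
  have h := (((hasDerivAt_rpow_const (p := k) (Or.inl hS.ne')).const_mul d).mul_const
    (exp (r * t))).add_const c
  rw [pS, h.deriv]
  ring

lemma pSS_rpow_mul_exp {S : ℝ} (hS : 0 < S) (t : ℝ) :
    pSS (fun s t => d * s ^ k * exp (r * t) + c) S t =
      d * k * (k - 1) * S ^ (k - 2) * exp (r * t) := by
  have hloc : (fun s => pS (fun s t => d * s ^ k * exp (r * t) + c) s t)
      =ᶠ[𝓝 S] fun s => d * k * s ^ (k - 1) * exp (r * t) := by
    filter_upwards [Ioi_mem_nhds hS] with s hs using pS_rpow_mul_exp d c k r hs t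
  have h := ((hasDerivAt_rpow_const (p := k - 1) (Or.inl hS.ne')).const_mul (d * k)).mul_const
    (exp (r * t))
  rw [pSS, hloc.deriv_eq, h.deriv, show k - 1 - 1 = k - 2 by ring]
  ring

lemma pt_rpow_mul_exp (S t : ℝ) :
    pt (fun s t => d * s ^ k * exp (r * t) + c) S t = r * (d * S ^ k * exp (r * t)) := by
  have h := ((((hasDerivAt_id t).const_mul r).exp).const_mul (d * S ^ k)).add_const c
  rw [pt]
  simp only [id, mul_one] at h
  rw [h.deriv]
  ring

lemma self_mul_pSS_rpow_mul_exp {S : ℝ} (hS : 0 < S) (t : ℝ) :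
    S * pSS (fun s t => d * s ^ k * exp (r * t) + c) S t =
      (k - 1) * pS (fun s t => d * s ^ k * exp (r * t) + c) S t := by
  rw [pSS_rpow_mul_exp d c k r hS, pS_rpow_mul_exp d c k r hS, show k - 2 = k - 1 - 1 by ring,
    rpow_sub_one hS.ne' (k - 1)]
  field_simp

lemma self_mul_pS_rpow_mul_exp {S : ℝ} (hS : 0 < S) (t : ℝ) :
    S * pS (fun s t => d * s ^ k * exp (r * t) + c) S t = k * (d * S ^ k * exp (r * t)) := by
  rw [pS_rpow_mul_exp d c k r hS, rpow_sub_one hS.ne']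
  field_simp

end PowerTimesExp

lemma special_model_denominator_eq {c₁ β k S uS uSS : ℝ} (hc₁ : c₁ ≠ 0)
    (hβ : β = (c₁ + 1) / c₁) (hSS : S * uSS = (k - 1) * uS) :
    uS - c₁ * S * uSS = c₁ * (β - k) * uS := by
  rw [mul_assoc c₁, hSS, hβ]
  field_simp
  ring

theorem special_model_of_power_relations {σ c₁ γ β κ k S uS uSS ut : ℝ}
    (hc₁ : c₁ ≠ 0) (hγ : γ ≠ 0) (hβ : β = (c₁ + 1) / c₁) (hκ : κ = σ ^ 2 / (2 * γ * c₁ ^ 2))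
    (hk : k ^ 2 - (2 * β + κ) * k + (β ^ 2 + κ) = 0) (hkβ : k ≠ β)
    (huS : uS ≠ 0) (hSS : S * uSS = (k - 1) * uS) (hut : ut = -γ * S * uS) :
    uS - c₁ * S * uSS ≠ 0 ∧
      ut + (1 / 2) * σ ^ 2 * S ^ 2 * uSS * uS ^ 2 / (uS - c₁ * S * uSS) ^ 2 = 0 := by
  have hden := special_model_denominator_eq hc₁ hβ hSS
  have hβk : β - k ≠ 0 := sub_ne_zero.2 hkβ.symm
  have hroot : κ * (k - 1) = (β - k) ^ 2 := by linear_combination -hk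
  have hσ : σ ^ 2 = 2 * γ * c₁ ^ 2 * κ := by rw [hκ]; field_simp
  refine ⟨by rw [hden]; exact mul_ne_zero (mul_ne_zero hc₁ hβk) huS, ?_⟩
  rw [hden, hut, hσ]
  field_simp
  linear_combination (γ * S * κ) * hSS + (γ * S * uS) * hroot

theorem power_option_solutions_special_model_general
    (σ c₁ γ β κ : ℝ) (hc₁ : c₁ ≠ 0) (hγ : γ ≠ 0)
    (hβ : β = (c₁ + 1) / c₁) (hκ : κ = σ ^ 2 / (2 * γ * c₁ ^ 2))
    (k : ℝ) (hk : k ^ 2 - (2 * β + κ) * k + (β ^ 2 + κ) = 0)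
    (hk0 : k ≠ 0) (hkβ : k ≠ β)
    (d₁ d₂ : ℝ) (hd₁ : d₁ ≠ 0)
    (u : ℝ → ℝ → ℝ)
    (hu : u = fun S t => d₁ * S ^ k * Real.exp (-γ * k * t) + d₂) :
    ∀ S ∈ Set.Ioi (0 : ℝ), ∀ t : ℝ,
      pS u S t - c₁ * S * pSS u S t ≠ 0 ∧
      pt u S t + (1 / 2) * σ ^ 2 * S ^ 2 * pSS u S t * (pS u S t) ^ 2 /
        (pS u S t - c₁ * S * pSS u S t) ^ 2 = 0 := by
  intro S hS t
  subst hu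
  refine special_model_of_power_relations hc₁ hγ hβ hκ hk hkβ ?_
    (self_mul_pSS_rpow_mul_exp d₁ d₂ k _ hS t) ?_
  · rw [pS_rpow_mul_exp d₁ d₂ k _ hS]
    have := rpow_pos_of_pos hS (k - 1)
    positivity
  · rw [mul_assoc, self_mul_pS_rpow_mul_exp d₁ d₂ k _ hS, pt_rpow_mul_exp]
    ring

/-- Invariant (power-option) solutions of the special model: with
`β = (c₁+1)/c₁`, `κ = σ²/(2γc₁²)` and `k` a root of
`k² − (2β+κ)k + (β²+κ) = 0` (with `d₁ ≠ 0`, `k ≠ 0`, `k ≠ β`), the function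
`u(S,t) = d₁ S^k e^{−γkt} + d₂` has nonvanishing denominator
`u_S − c₁ S u_SS ≠ 0` and solves the special-model PDE
`u_t + (1/2) σ² S² u_SS u_S² / (u_S − c₁ S u_SS)² = 0` for all `S > 0`, `t`. -/
theorem power_option_solutions_special_model
    (σ c₁ γ β κ : ℝ) (hσ : 0 < σ) (hc₁ : c₁ ≠ 0) (hγ : γ ≠ 0)
    (hβ : β = (c₁ + 1) / c₁) (hκ : κ = σ ^ 2 / (2 * γ * c₁ ^ 2))
    (hdisc : 0 ≤ κ * (κ + 4 * (β - 1)))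
    (k : ℝ) (hk : k ^ 2 - (2 * β + κ) * k + (β ^ 2 + κ) = 0)
    (hk0 : k ≠ 0) (hkβ : k ≠ β)
    (d₁ d₂ : ℝ) (hd₁ : d₁ ≠ 0)
    (u : ℝ → ℝ → ℝ)
    (hu : u = fun S t => d₁ * S ^ k * Real.exp (-γ * k * t) + d₂) :
    ∀ S ∈ Set.Ioi (0 : ℝ), ∀ t : ℝ,
      pS u S t - c₁ * S * pSS u S t ≠ 0 ∧
      pt u S t + (1 / 2) * σ ^ 2 * S ^ 2 * pSS u S t * (pS u S t) ^ 2 /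
        (pS u S t - c₁ * S * pSS u S t) ^ 2 = 0 :=
  power_option_solutions_special_model_general σ c₁ γ β κ hc₁ hγ hβ hκ k hk hk0 hkβ d₁ d₂ hd₁ u hu
end

section
/- Let c₁ ≠ 0, β = (c₁+1)/c₁, γ ∈ ℝ, and d₁, d₂ ∈ ℝ. Then the function u(S,t) = d₁·S^β·e^{−γβt} + d₂ satisfies u_S(S,t) − c₁·S·u_SS(S,t) = 0 for all S > 0 and t ∈ ℝ; that is, the denominator of the nonlinear term in the special-model PDE u_t + (1/2)·σ²S²·u_SS·u_S²/(u_S − c₁·S·u_SS)² = 0 vanishes identically on this two-parameter family of functions (which must therefore be excluded from the reduction procedure). -/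
/-! For `u = A(t) S^b + B(t)` one has `u_S − c S u_SS = (1 − c (b − 1)) u_S`,
and `β − 1 = 1/c₁` makes the factor vanish. -/

open Real Set

lemma hasDerivAt_const_mul_rpow (a b : ℝ) {S : ℝ} (hS : 0 < S) :
    HasDerivAt (fun s : ℝ => a * s ^ b) (a * b * S ^ (b - 1)) S := by
  simpa only [mul_assoc] using (hasDerivAt_rpow_const (p := b) (Or.inl hS.ne')).const_mul a

section PowerFamily

variable (A B : ℝ → ℝ) (b : ℝ)

lemma pS_rpow_family {S : ℝ} (hS : 0 < S) (t : ℝ) :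
    pS (fun s t => A t * s ^ b + B t) S t = A t * b * S ^ (b - 1) :=
  ((hasDerivAt_const_mul_rpow (A t) b hS).add_const (B t)).deriv

lemma pSS_rpow_family {S : ℝ} (hS : 0 < S) (t : ℝ) :
    pSS (fun s t => A t * s ^ b + B t) S t = A t * b * (b - 1) * S ^ (b - 2) := by
  have hpS : (fun s => pS (fun s t => A t * s ^ b + B t) s t)
      =ᶠ[nhds S] fun s => A t * b * s ^ (b - 1) := by
    filter_upwards [Ioi_mem_nhds hS] with s hs using pS_rpow_family A B b hs t
  rw [pSS, hpS.deriv_eq, (hasDerivAt_const_mul_rpow (A t * b) (b - 1) hS).deriv]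
  ring_nf

lemma pS_sub_mul_pSS_rpow_family (c : ℝ) {S : ℝ} (hS : 0 < S) (t : ℝ) :
    pS (fun s t => A t * s ^ b + B t) S t - c * S * pSS (fun s t => A t * s ^ b + B t) S t
      = (1 - c * (b - 1)) * (A t * b * S ^ (b - 1)) := by
  have hpow : S * S ^ (b - 2) = S ^ (b - 1) := by
    rw [mul_comm, ← rpow_add_one hS.ne']
    ring_nf
  rw [pS_rpow_family A B b hS, pSS_rpow_family A B b hS, ← hpow]
  ring

end PowerFamily

/-- The two-parameter family `u(S,t) = d₁ S^β e^{−γβt} + d₂`, `β = (c₁+1)/c₁`,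
annihilates the denominator of the nonlinear term of the special-model PDE:
`u_S − c₁ S u_SS = 0` for all `S > 0` and `t`. -/
theorem denominator_vanishing_family
    (c₁ γ β : ℝ) (hc₁ : c₁ ≠ 0) (hβ : β = (c₁ + 1) / c₁)
    (d₁ d₂ : ℝ)
    (u : ℝ → ℝ → ℝ)
    (hu : u = fun S t => d₁ * S ^ β * Real.exp (-γ * β * t) + d₂) :
    ∀ S ∈ Set.Ioi (0 : ℝ), ∀ t : ℝ,
      pS u S t - c₁ * S * pSS u S t = 0 := by
  intro S hS t
  have hu' : u = fun S t => d₁ * Real.exp (-γ * β * t) * S ^ β + d₂ := by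
    rw [hu]
    ext S t
    ring
  have hc : 1 - c₁ * (β - 1) = 0 := by
    rw [hβ]
    field_simp
    ring
  rw [hu', pS_sub_mul_pSS_rpow_family (fun t => d₁ * Real.exp (-γ * β * t)) (fun _ => d₂) β c₁ hS t,
    hc, zero_mul]
end

section
/- Let σ > 0, c₁ ≠ 0, γ ≠ 0, δ ≠ 0, and set β = (c₁+1)/c₁ and κ = σ²/(2c₁²). Let W : ℝ → ℝ be twice differentiable with W''(z) + W'(z)² − β·W'(z) ≠ 0 for all z, and define u(S,t) = exp(δt + W(ln S − γt)) for S > 0. Then: (a) u solves the special-model PDE u_t + (1/2)·σ²S²·u_SS·u_S² / (u_S − c₁·S·u_SS)² = 0 if and only if W satisfies δ − γ·W' + κ·(W')²·(W'' + (W')² − W') / (W'' + (W')² − β·W')² = 0 on ℝ; and (b) this holds if and only if Y = W' satisfies the first-order ODE (Y')²·(δ − γY) + Y'·Y·(2(δ − γY)(Y − β) + κY) + Y²·((δ − γY)(Y − β)² + κY(Y − 1)) = 0 on ℝ. (This is the reduction of the special model under the subgroup H₃, with invariants z = ln S − γt, W = ln u − δt.) -/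
/-!
In the invariants `z = ln S − γt`, `W = ln u − δt` the ansatz gives, by the chain rule,
`u_t = u (δ − γW')`, `S u_S = u W'` and `S² u_SS = u (W'' + W'² − W')`. Hence
`u_S − c₁ S u_SS = −c₁ (u / S) (W'' + W'² − βW')`, and the PDE becomes `u` times the reduced
equation in `z`; as `u > 0` and `(S, t) ↦ ln S − γt` is onto `ℝ`, part (a) follows. Part (b) is
the reduced equation multiplied by the nonvanishing `(W'' + W'² − βW')²`, with `Y = W'`.
-/

open Real Set

open Filter Topology

noncomputable def h3Ansatz (δ γ : ℝ) (W : ℝ → ℝ) (S t : ℝ) : ℝ :=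
  exp (δ * t + W (log S - γ * t))

/-- The reduced equation for `W` reads `h3Reduced δ γ κ β (W' z) (W'' z) = 0`. -/
noncomputable def h3Reduced (δ γ κ β Y A : ℝ) : ℝ :=
  δ - γ * Y + κ * Y ^ 2 * (A + Y ^ 2 - Y) / (A + Y ^ 2 - β * Y) ^ 2

section Derivatives

variable {δ γ : ℝ} {W : ℝ → ℝ}

theorem hasDerivAt_h3Ansatz_S (hW : Differentiable ℝ W) {S : ℝ} (hS : 0 < S) (t : ℝ) :
    HasDerivAt (fun s => h3Ansatz δ γ W s t)
      (h3Ansatz δ γ W S t * deriv W (log S - γ * t) / S) S := by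
  have hz : HasDerivAt (fun s => W (log s - γ * t)) (deriv W (log S - γ * t) * S⁻¹) S :=
    (hW _).hasDerivAt.comp S ((hasDerivAt_log hS.ne').sub_const _)
  refine (hz.const_add (δ * t)).exp.congr_deriv ?_
  rw [h3Ansatz]
  ring

theorem pS_h3Ansatz (hW : Differentiable ℝ W) {S : ℝ} (hS : 0 < S) (t : ℝ) :
    pS (h3Ansatz δ γ W) S t = h3Ansatz δ γ W S t * deriv W (log S - γ * t) / S :=
  (hasDerivAt_h3Ansatz_S hW hS t).deriv

theorem pSS_h3Ansatz (hW : Differentiable ℝ W) (hW' : Differentiable ℝ (deriv W))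
    {S : ℝ} (hS : 0 < S) (t : ℝ) :
    pSS (h3Ansatz δ γ W) S t = h3Ansatz δ γ W S t *
      (deriv (deriv W) (log S - γ * t) + deriv W (log S - γ * t) ^ 2
        - deriv W (log S - γ * t)) / S ^ 2 := by
  have hpS : (fun s => pS (h3Ansatz δ γ W) s t) =ᶠ[𝓝 S]
      fun s => h3Ansatz δ γ W s t * deriv W (log s - γ * t) * s⁻¹ := by
    filter_upwards [Ioi_mem_nhds hS] with s hs
    rw [pS_h3Ansatz hW hs, div_eq_mul_inv]
  have hW'z : HasDerivAt (fun s => deriv W (log s - γ * t))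
      (deriv (deriv W) (log S - γ * t) * S⁻¹) S :=
    (hW' _).hasDerivAt.comp S ((hasDerivAt_log hS.ne').sub_const _)
  rw [pSS, hpS.deriv_eq]
  refine (((hasDerivAt_h3Ansatz_S hW hS t).mul hW'z).mul (hasDerivAt_inv hS.ne')).deriv.trans ?_
  simp only [Pi.mul_apply]
  field_simp
  ring

theorem pt_h3Ansatz (hW : Differentiable ℝ W) (S t : ℝ) :
    pt (h3Ansatz δ γ W) S t = h3Ansatz δ γ W S t * (δ - γ * deriv W (log S - γ * t)) := by
  have hz : HasDerivAt (fun τ => W (log S - γ * τ)) (deriv W (log S - γ * t) * -(γ * 1)) t :=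
    (hW _).hasDerivAt.comp t ((hasDerivAt_id' t).const_mul γ |>.const_sub (log S))
  refine (((hasDerivAt_id' t).const_mul δ).add hz).exp.deriv.trans ?_
  simp only [Pi.add_apply, h3Ansatz]
  ring

end Derivatives

theorem specialModel_residual_eq (σ c₁ δ γ S E Y A : ℝ) (hc₁ : c₁ ≠ 0) (hS : S ≠ 0) :
    E * (δ - γ * Y) + (1 / 2) * σ ^ 2 * S ^ 2 * (E * (A + Y ^ 2 - Y) / S ^ 2) * (E * Y / S) ^ 2 /
        (E * Y / S - c₁ * S * (E * (A + Y ^ 2 - Y) / S ^ 2)) ^ 2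
      = E * h3Reduced δ γ (σ ^ 2 / (2 * c₁ ^ 2)) ((c₁ + 1) / c₁) Y A := by
  have hdenom : E * Y / S - c₁ * S * (E * (A + Y ^ 2 - Y) / S ^ 2)
      = -(c₁ * E / S) * (A + Y ^ 2 - (c₁ + 1) / c₁ * Y) := by
    field_simp
    ring
  rw [hdenom, h3Reduced]
  -- `x / 0 = 0` makes both sides vanish when `E = 0` or when the bracket vanishes.
  rcases eq_or_ne E 0 with rfl | hE
  · simp
  rcases eq_or_ne (A + Y ^ 2 - (c₁ + 1) / c₁ * Y) 0 with hD | hD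
  · simp [hD]
  field_simp

theorem h3Reduced_eq_zero_iff (δ γ κ β Y A : ℝ) (hD : A + Y ^ 2 - β * Y ≠ 0) :
    h3Reduced δ γ κ β Y A = 0 ↔
      A ^ 2 * (δ - γ * Y) + A * Y * (2 * (δ - γ * Y) * (Y - β) + κ * Y) +
        Y ^ 2 * ((δ - γ * Y) * (Y - β) ^ 2 + κ * Y * (Y - 1)) = 0 := by
  rw [h3Reduced, ← mul_left_inj' (pow_ne_zero 2 hD), zero_mul, add_mul,
    div_mul_cancel₀ _ (pow_ne_zero 2 hD)]
  constructor <;> intro h <;> linear_combination h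

theorem specialModel_h3Ansatz_iff (σ c₁ δ γ : ℝ) (hc₁ : c₁ ≠ 0) {W : ℝ → ℝ}
    (hW : Differentiable ℝ W) (hW' : Differentiable ℝ (deriv W)) {S : ℝ} (hS : 0 < S) (t : ℝ) :
    pt (h3Ansatz δ γ W) S t + (1 / 2) * σ ^ 2 * S ^ 2 * pSS (h3Ansatz δ γ W) S t *
        (pS (h3Ansatz δ γ W) S t) ^ 2 /
        (pS (h3Ansatz δ γ W) S t - c₁ * S * pSS (h3Ansatz δ γ W) S t) ^ 2 = 0 ↔
      h3Reduced δ γ (σ ^ 2 / (2 * c₁ ^ 2)) ((c₁ + 1) / c₁)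
        (deriv W (log S - γ * t)) (deriv (deriv W) (log S - γ * t)) = 0 := by
  rw [pt_h3Ansatz hW, pS_h3Ansatz hW hS, pSS_h3Ansatz hW hW' hS,
    specialModel_residual_eq σ c₁ δ γ S _ _ _ hc₁ hS.ne', mul_eq_zero]
  exact or_iff_right (exp_ne_zero _)

theorem special_model_reduction_H3_general
    (σ c₁ γ δ β κ : ℝ) (hc₁ : c₁ ≠ 0)
    (hβ : β = (c₁ + 1) / c₁) (hκ : κ = σ ^ 2 / (2 * c₁ ^ 2))
    (W : ℝ → ℝ) (hW : Differentiable ℝ W) (hW' : Differentiable ℝ (deriv W))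
    (hden : ∀ z : ℝ,
      deriv (deriv W) z + (deriv W z) ^ 2 - β * deriv W z ≠ 0)
    (u : ℝ → ℝ → ℝ)
    (hu : u = fun S t => Real.exp (δ * t + W (Real.log S - γ * t))) :
    ((∀ S ∈ Set.Ioi (0 : ℝ), ∀ t : ℝ,
      pt u S t + (1 / 2) * σ ^ 2 * S ^ 2 * pSS u S t * (pS u S t) ^ 2 /
        (pS u S t - c₁ * S * pSS u S t) ^ 2 = 0)
    ↔
    (∀ z : ℝ,
      δ - γ * deriv W z +
        κ * (deriv W z) ^ 2 *
          (deriv (deriv W) z + (deriv W z) ^ 2 - deriv W z) /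
          (deriv (deriv W) z + (deriv W z) ^ 2 - β * deriv W z) ^ 2 = 0)) ∧
    ((∀ z : ℝ,
      δ - γ * deriv W z +
        κ * (deriv W z) ^ 2 *
          (deriv (deriv W) z + (deriv W z) ^ 2 - deriv W z) /
          (deriv (deriv W) z + (deriv W z) ^ 2 - β * deriv W z) ^ 2 = 0)
    ↔
    (∀ z : ℝ,
      (deriv (deriv W) z) ^ 2 * (δ - γ * deriv W z) +
        deriv (deriv W) z * deriv W z *
          (2 * (δ - γ * deriv W z) * (deriv W z - β) + κ * deriv W z) +
        (deriv W z) ^ 2 *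
          ((δ - γ * deriv W z) * (deriv W z - β) ^ 2 +
            κ * deriv W z * (deriv W z - 1)) = 0)) := by
  have hu' : u = h3Ansatz δ γ W := hu
  subst hu' hβ hκ
  refine ⟨⟨fun h z => ?_, fun h S hS t => ?_⟩,
    forall_congr' fun z => h3Reduced_eq_zero_iff _ _ _ _ _ _ (hden z)⟩
  · have hz := (specialModel_h3Ansatz_iff σ c₁ δ γ hc₁ hW hW' (exp_pos z) 0).mp
      (h _ (exp_pos z) 0)
    rwa [log_exp, mul_zero, sub_zero] at hz
  · exact (specialModel_h3Ansatz_iff σ c₁ δ γ hc₁ hW hW' hS t).mpr (h _)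

/-- Reduction of the special model under the subgroup `H₃` (invariants
`z = ln S − γt`, `W = ln u − δt`): with `β = (c₁+1)/c₁`, `κ = σ²/(2c₁²)`, the
ansatz `u(S,t) = exp(δt + W(ln S − γt))` solves the special-model PDE iff
`δ − γW' + κ(W')²(W'' + (W')² − W')/(W'' + (W')² − βW')² = 0`, which holds iff
`Y = W'` satisfies
`(Y')²(δ−γY) + Y'Y(2(δ−γY)(Y−β)+κY) + Y²((δ−γY)(Y−β)² + κY(Y−1)) = 0`. -/
theorem special_model_reduction_H3
    (σ c₁ γ δ β κ : ℝ) (hσ : 0 < σ) (hc₁ : c₁ ≠ 0) (hγ : γ ≠ 0) (hδ : δ ≠ 0)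
    (hβ : β = (c₁ + 1) / c₁) (hκ : κ = σ ^ 2 / (2 * c₁ ^ 2))
    (W : ℝ → ℝ) (hW : Differentiable ℝ W) (hW' : Differentiable ℝ (deriv W))
    (hden : ∀ z : ℝ,
      deriv (deriv W) z + (deriv W z) ^ 2 - β * deriv W z ≠ 0)
    (u : ℝ → ℝ → ℝ)
    (hu : u = fun S t => Real.exp (δ * t + W (Real.log S - γ * t))) :
    ((∀ S ∈ Set.Ioi (0 : ℝ), ∀ t : ℝ,
      pt u S t + (1 / 2) * σ ^ 2 * S ^ 2 * pSS u S t * (pS u S t) ^ 2 /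
        (pS u S t - c₁ * S * pSS u S t) ^ 2 = 0)
    ↔
    (∀ z : ℝ,
      δ - γ * deriv W z +
        κ * (deriv W z) ^ 2 *
          (deriv (deriv W) z + (deriv W z) ^ 2 - deriv W z) /
          (deriv (deriv W) z + (deriv W z) ^ 2 - β * deriv W z) ^ 2 = 0)) ∧
    ((∀ z : ℝ,
      δ - γ * deriv W z +
        κ * (deriv W z) ^ 2 *
          (deriv (deriv W) z + (deriv W z) ^ 2 - deriv W z) /
          (deriv (deriv W) z + (deriv W z) ^ 2 - β * deriv W z) ^ 2 = 0)
    ↔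
    (∀ z : ℝ,
      (deriv (deriv W) z) ^ 2 * (δ - γ * deriv W z) +
        deriv (deriv W) z * deriv W z *
          (2 * (δ - γ * deriv W z) * (deriv W z - β) + κ * deriv W z) +
        (deriv W z) ^ 2 *
          ((δ - γ * deriv W z) * (deriv W z - β) ^ 2 +
            κ * deriv W z * (deriv W z - 1)) = 0)) :=
  special_model_reduction_H3_general σ c₁ γ δ β κ hc₁ hβ hκ W hW hW' hden u hu
end

section
/- Let σ > 0, c₁ ≠ 0, γ ≠ 0, η ≠ 0, and set β = (c₁+1)/c₁ and κ = σ²/(2c₁²). Let W : ℝ → ℝ be twice differentiable with W''(z) − β·W'(z) ≠ 0 for all z, and define u(S,t) = η·t + W(ln S − γt) for S > 0. Then: (a) u solves the special-model PDE u_t + (1/2)·σ²S²·u_SS·u_S² / (u_S − c₁·S·u_SS)² = 0 if and only if W satisfies η − γ·W' + κ·(W'' − W')·(W')² / (W'' − β·W')² = 0 on ℝ; and (b) this holds if and only if Y = W' satisfies the first-order ODE (Y')²·(η − γY) + Y'·Y·(Y(2βγ + κ) − 2βη) − Y²·(Y(β²γ + κ) − β²η) = 0 on ℝ. (This is the reduction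 of the special model under the subgroup H₄, with invariants z = ln S − γt, W = u − ηt.) -/
open Real Set

/-! The ansatz `u = ηt + W(z)` with `z = ln S − γt` has `u_t = η − γW'`, `S u_S = W'` and
`S² u_SS = W'' − W'`, so every term of the PDE is a function of `z` alone: the powers of `S`
cancel and `u_S − c₁ S u_SS = −c₁ (W'' − βW')/S`, which yields the reduced equation. Clearing its
nonvanishing denominator `(W'' − βW')²` gives the polynomial ODE for `Y = W'`. -/

section TravellingWave

variable (η γ : ℝ) {W : ℝ → ℝ} (hW : Differentiable ℝ W)
include hW

theorem pS_travellingWave {S : ℝ} (hS : S ≠ 0) (t : ℝ) :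
    pS (fun S t => η * t + W (log S - γ * t)) S t = deriv W (log S - γ * t) / S := by
  have hz : HasDerivAt (fun s => log s - γ * t) S⁻¹ S := (hasDerivAt_log hS).sub_const _
  rw [div_eq_mul_inv]
  exact (((hW _).hasDerivAt.comp S hz).const_add (η * t)).deriv

theorem pSS_travellingWave (hW' : Differentiable ℝ (deriv W)) {S : ℝ} (hS : S ≠ 0) (t : ℝ) :
    pSS (fun S t => η * t + W (log S - γ * t)) S t =
      (deriv (deriv W) (log S - γ * t) - deriv W (log S - γ * t)) / S ^ 2 := by
  have hpS : (fun s => pS (fun S t => η * t + W (log S - γ * t)) s t)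
      =ᶠ[nhds S] fun s => deriv W (log s - γ * t) / s := by
    filter_upwards [isOpen_ne.mem_nhds hS] with s hs
    exact pS_travellingWave η γ hW hs t
  have hz : HasDerivAt (fun s => log s - γ * t) S⁻¹ S := (hasDerivAt_log hS).sub_const _
  have hW'z : HasDerivAt (fun s => deriv W (log s - γ * t))
      (deriv (deriv W) (log S - γ * t) * S⁻¹) S := (hW' _).hasDerivAt.comp S hz
  have hquot : HasDerivAt (fun s => deriv W (log s - γ * t) / s)
      ((deriv (deriv W) (log S - γ * t) * S⁻¹ * S - deriv W (log S - γ * t) * 1) / S ^ 2) S :=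
    hW'z.div (hasDerivAt_id' S) hS
  rw [pSS, hpS.deriv_eq, hquot.deriv]
  field_simp

theorem pt_travellingWave (S t : ℝ) :
    pt (fun S t => η * t + W (log S - γ * t)) S t = η - γ * deriv W (log S - γ * t) := by
  have hz : HasDerivAt (fun τ => log S - γ * τ) (-γ) t := by
    simpa using ((hasDerivAt_id t).const_mul γ).const_sub (log S)
  have hu : HasDerivAt (fun τ => η * τ + W (log S - γ * τ))
      (η * 1 + deriv W (log S - γ * t) * -γ) t :=
    ((hasDerivAt_id' t).const_mul η).add ((hW _).hasDerivAt.comp t hz)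
  rw [pt, hu.deriv]
  ring

end TravellingWave

theorem specialModel_lhs_eq_reduced {σ c₁ β κ η γ S A B : ℝ} (hc₁ : c₁ ≠ 0)
    (hβ : β = (c₁ + 1) / c₁) (hκ : κ = σ ^ 2 / (2 * c₁ ^ 2)) (hS : S ≠ 0) :
    η - γ * A + (1 / 2) * σ ^ 2 * S ^ 2 * ((B - A) / S ^ 2) * (A / S) ^ 2 /
      (A / S - c₁ * S * ((B - A) / S ^ 2)) ^ 2 =
      η - γ * A + κ * (B - A) * A ^ 2 / (B - β * A) ^ 2 := by
  have hden : A / S - c₁ * S * ((B - A) / S ^ 2) = -c₁ * (B - β * A) / S := by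
    rw [hβ]; field_simp; ring
  rw [hden, hκ]
  -- when `B = βA` both sides divide by zero and reduce to `η - γA`
  by_cases hd : B - β * A = 0
  · simp [hd]
  · field_simp

theorem reduced_eq_zero_iff_ode {β κ η γ Y Y' : ℝ} (hd : Y' - β * Y ≠ 0) :
    η - γ * Y + κ * (Y' - Y) * Y ^ 2 / (Y' - β * Y) ^ 2 = 0 ↔
      Y' ^ 2 * (η - γ * Y) + Y' * Y * (Y * (2 * β * γ + κ) - 2 * β * η) -
        Y ^ 2 * (Y * (β ^ 2 * γ + κ) - β ^ 2 * η) = 0 := by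
  rw [← mul_left_inj' (pow_ne_zero 2 hd), add_mul, div_mul_cancel₀ _ (pow_ne_zero 2 hd), zero_mul]
  constructor <;> intro h <;> linear_combination h

theorem specialModel_travellingWave_eq_reduced {σ c₁ β κ η γ : ℝ} (hc₁ : c₁ ≠ 0)
    (hβ : β = (c₁ + 1) / c₁) (hκ : κ = σ ^ 2 / (2 * c₁ ^ 2)) {W : ℝ → ℝ}
    (hW : Differentiable ℝ W) (hW' : Differentiable ℝ (deriv W)) {u : ℝ → ℝ → ℝ}
    (hu : u = fun S t => η * t + W (log S - γ * t)) {S z : ℝ} (hS : S ≠ 0) (t : ℝ)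
    (hz : z = log S - γ * t) :
    pt u S t + (1 / 2) * σ ^ 2 * S ^ 2 * pSS u S t * (pS u S t) ^ 2 /
        (pS u S t - c₁ * S * pSS u S t) ^ 2 =
      η - γ * deriv W z +
        κ * (deriv (deriv W) z - deriv W z) * (deriv W z) ^ 2 /
          (deriv (deriv W) z - β * deriv W z) ^ 2 := by
  subst hu hz
  rw [pS_travellingWave η γ hW hS, pSS_travellingWave η γ hW hW' hS, pt_travellingWave η γ hW]
  exact specialModel_lhs_eq_reduced hc₁ hβ hκ hS

theorem special_model_reduction_H4_general
    (σ c₁ γ η β κ : ℝ) (hc₁ : c₁ ≠ 0)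
    (hβ : β = (c₁ + 1) / c₁) (hκ : κ = σ ^ 2 / (2 * c₁ ^ 2))
    (W : ℝ → ℝ) (hW : Differentiable ℝ W) (hW' : Differentiable ℝ (deriv W))
    (hden : ∀ z : ℝ, deriv (deriv W) z - β * deriv W z ≠ 0)
    (u : ℝ → ℝ → ℝ)
    (hu : u = fun S t => η * t + W (Real.log S - γ * t)) :
    ((∀ S ∈ Set.Ioi (0 : ℝ), ∀ t : ℝ,
      pt u S t + (1 / 2) * σ ^ 2 * S ^ 2 * pSS u S t * (pS u S t) ^ 2 /
        (pS u S t - c₁ * S * pSS u S t) ^ 2 = 0)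
    ↔
    (∀ z : ℝ,
      η - γ * deriv W z +
        κ * (deriv (deriv W) z - deriv W z) * (deriv W z) ^ 2 /
          (deriv (deriv W) z - β * deriv W z) ^ 2 = 0)) ∧
    ((∀ z : ℝ,
      η - γ * deriv W z +
        κ * (deriv (deriv W) z - deriv W z) * (deriv W z) ^ 2 /
          (deriv (deriv W) z - β * deriv W z) ^ 2 = 0)
    ↔
    (∀ z : ℝ,
      (deriv (deriv W) z) ^ 2 * (η - γ * deriv W z) +
        deriv (deriv W) z * deriv W z *
          (deriv W z * (2 * β * γ + κ) - 2 * β * η) -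
        (deriv W z) ^ 2 *
          (deriv W z * (β ^ 2 * γ + κ) - β ^ 2 * η) = 0)) := by
  have hpde := fun {S z : ℝ} (hS : S ∈ Ioi 0) (t : ℝ) =>
    specialModel_travellingWave_eq_reduced hc₁ hβ hκ hW hW' hu (ne_of_gt hS) t (z := z)
  refine ⟨⟨fun h z => ?_, fun h S hS t => ?_⟩,
    forall_congr' fun z => reduced_eq_zero_iff_ode (hden z)⟩
  · rw [← hpde (exp_pos z) 0 (by simp)]
    exact h _ (exp_pos z) 0
  · rw [hpde hS t rfl]
    exact h _

/-- Reduction of the special model under the subgroup `H₄` (invariants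
`z = ln S − γt`, `W = u − ηt`): with `β = (c₁+1)/c₁`, `κ = σ²/(2c₁²)`, the
ansatz `u(S,t) = ηt + W(ln S − γt)` solves the special-model PDE iff
`η − γW' + κ(W'' − W')(W')²/(W'' − βW')² = 0`, which holds iff `Y = W'`
satisfies `(Y')²(η−γY) + Y'Y(Y(2βγ+κ)−2βη) − Y²(Y(β²γ+κ)−β²η) = 0`. -/
theorem special_model_reduction_H4
    (σ c₁ γ η β κ : ℝ) (hσ : 0 < σ) (hc₁ : c₁ ≠ 0) (hγ : γ ≠ 0) (hη : η ≠ 0)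
    (hβ : β = (c₁ + 1) / c₁) (hκ : κ = σ ^ 2 / (2 * c₁ ^ 2))
    (W : ℝ → ℝ) (hW : Differentiable ℝ W) (hW' : Differentiable ℝ (deriv W))
    (hden : ∀ z : ℝ, deriv (deriv W) z - β * deriv W z ≠ 0)
    (u : ℝ → ℝ → ℝ)
    (hu : u = fun S t => η * t + W (Real.log S - γ * t)) :
    ((∀ S ∈ Set.Ioi (0 : ℝ), ∀ t : ℝ,
      pt u S t + (1 / 2) * σ ^ 2 * S ^ 2 * pSS u S t * (pS u S t) ^ 2 /
        (pS u S t - c₁ * S * pSS u S t) ^ 2 = 0)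
    ↔
    (∀ z : ℝ,
      η - γ * deriv W z +
        κ * (deriv (deriv W) z - deriv W z) * (deriv W z) ^ 2 /
          (deriv (deriv W) z - β * deriv W z) ^ 2 = 0)) ∧
    ((∀ z : ℝ,
      η - γ * deriv W z +
        κ * (deriv (deriv W) z - deriv W z) * (deriv W z) ^ 2 /
          (deriv (deriv W) z - β * deriv W z) ^ 2 = 0)
    ↔
    (∀ z : ℝ,
      (deriv (deriv W) z) ^ 2 * (η - γ * deriv W z) +
        deriv (deriv W) z * deriv W z *
          (deriv W z * (2 * β * γ + κ) - 2 * β * η) -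
        (deriv W z) ^ 2 *
          (deriv W z * (β ^ 2 * γ + κ) - β ^ 2 * η) = 0)) :=
  special_model_reduction_H4_general σ c₁ γ η β κ hc₁ hβ hκ W hW hW' hden u hu
end
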